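/- arXiv:math/9804162 — 4 statements merged into one kernel-verified Lean document; each statement's English description precedes it below -/
import Mathlib

section
/- Let φ : ℝ³ → ℝ be a smooth function of (x, y, t) that is nowhere zero and satisfies the linear heat-type equation φ_t + φ_xx = 0. Then the functions u(x,y,t) = 2 φ_x/φ and h(x,y,t) = -2 φ_x φ_y/φ² + 2 φ_xy/φ - 1 satisfy the (2+1)-dimensional dispersive long wave equations: u_yt + h_xx + (1/2)(u²)_xy = 0 and h_t + (u h + u + u_xy)_x = 0. -/
noncomputable def pdx (f : ℝ → ℝ → ℝ → ℝ) : ℝ → ℝ → ℝ → ℝ :=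
  fun x y t => deriv (fun x' => f x' y t) x

noncomputable def pdy (f : ℝ → ℝ → ℝ → ℝ) : ℝ → ℝ → ℝ → ℝ :=
  fun x y t => deriv (fun y' => f x y' t) y

noncomputable def pdt (f : ℝ → ℝ → ℝ → ℝ) : ℝ → ℝ → ℝ → ℝ :=
  fun x y t => deriv (fun t' => f x y t') t

def Sm (f : ℝ → ℝ → ℝ → ℝ) : Prop :=
  ContDiff ℝ ((⊤ : ℕ∞) : WithTop ℕ∞) (fun p : ℝ × ℝ × ℝ => f p.1 p.2.1 p.2.2)

namespace Sm

variable {f : ℝ → ℝ → ℝ → ℝ}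

lemma diff (hf : Sm f) : Differentiable ℝ (fun p : ℝ × ℝ × ℝ => f p.1 p.2.1 p.2.2) :=
  hf.differentiable (by simp)

lemma pdx_eq_fderiv (hf : Sm f) (x y t : ℝ) :
    pdx f x y t
      = fderiv ℝ (fun p : ℝ × ℝ × ℝ => f p.1 p.2.1 p.2.2) (x, y, t) (1, 0, 0) := by
  have hγ : HasDerivAt (fun s : ℝ => ((s, y, t) : ℝ × ℝ × ℝ)) (1, 0, 0) x :=
    (hasDerivAt_id x).prodMk ((hasDerivAt_const x y).prodMk (hasDerivAt_const x t))
  have h := ((hf.diff (x, y, t)).hasFDerivAt).comp_hasDerivAt x hγ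
  simpa [Function.comp_def, pdx] using h.deriv

lemma hasDerivAt_x (hf : Sm f) (x y t : ℝ) :
    HasDerivAt (fun x' => f x' y t) (pdx f x y t) x := by
  have hγ : HasDerivAt (fun s : ℝ => ((s, y, t) : ℝ × ℝ × ℝ)) (1, 0, 0) x :=
    (hasDerivAt_id x).prodMk ((hasDerivAt_const x y).prodMk (hasDerivAt_const x t))
  have h := ((hf.diff (x, y, t)).hasFDerivAt).comp_hasDerivAt x hγ
  rw [hf.pdx_eq_fderiv x y t]
  simpa [Function.comp_def] using h

lemma pdy_eq_fderiv (hf : Sm f) (x y t : ℝ) :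
    pdy f x y t
      = fderiv ℝ (fun p : ℝ × ℝ × ℝ => f p.1 p.2.1 p.2.2) (x, y, t) (0, 1, 0) := by
  have hγ : HasDerivAt (fun s : ℝ => ((x, s, t) : ℝ × ℝ × ℝ)) (0, 1, 0) y :=
    (hasDerivAt_const y x).prodMk ((hasDerivAt_id y).prodMk (hasDerivAt_const y t))
  have h := ((hf.diff (x, y, t)).hasFDerivAt).comp_hasDerivAt y hγ
  simpa [Function.comp_def, pdy] using h.deriv

lemma hasDerivAt_y (hf : Sm f) (x y t : ℝ) :
    HasDerivAt (fun y' => f x y' t) (pdy f x y t) y := by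
  have hγ : HasDerivAt (fun s : ℝ => ((x, s, t) : ℝ × ℝ × ℝ)) (0, 1, 0) y :=
    (hasDerivAt_const y x).prodMk ((hasDerivAt_id y).prodMk (hasDerivAt_const y t))
  have h := ((hf.diff (x, y, t)).hasFDerivAt).comp_hasDerivAt y hγ
  rw [hf.pdy_eq_fderiv x y t]
  simpa [Function.comp_def] using h

lemma pdt_eq_fderiv (hf : Sm f) (x y t : ℝ) :
    pdt f x y t
      = fderiv ℝ (fun p : ℝ × ℝ × ℝ => f p.1 p.2.1 p.2.2) (x, y, t) (0, 0, 1) := by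
  have hγ : HasDerivAt (fun s : ℝ => ((x, y, s) : ℝ × ℝ × ℝ)) (0, 0, 1) t :=
    (hasDerivAt_const t x).prodMk ((hasDerivAt_const t y).prodMk (hasDerivAt_id t))
  have h := ((hf.diff (x, y, t)).hasFDerivAt).comp_hasDerivAt t hγ
  simpa [Function.comp_def, pdt] using h.deriv

lemma hasDerivAt_t (hf : Sm f) (x y t : ℝ) :
    HasDerivAt (fun t' => f x y t') (pdt f x y t) t := by
  have hγ : HasDerivAt (fun s : ℝ => ((x, y, s) : ℝ × ℝ × ℝ)) (0, 0, 1) t :=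
    (hasDerivAt_const t x).prodMk ((hasDerivAt_const t y).prodMk (hasDerivAt_id t))
  have h := ((hf.diff (x, y, t)).hasFDerivAt).comp_hasDerivAt t hγ
  rw [hf.pdt_eq_fderiv x y t]
  simpa [Function.comp_def] using h

lemma fderiv_apply_smooth (hf : Sm f) (v : ℝ × ℝ × ℝ) :
    ContDiff ℝ ((⊤ : ℕ∞) : WithTop ℕ∞)
      (fun p : ℝ × ℝ × ℝ => fderiv ℝ (fun q : ℝ × ℝ × ℝ => f q.1 q.2.1 q.2.2) p v) := by
  have h1 : ContDiff ℝ ((⊤ : ℕ∞) : WithTop ℕ∞)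
      (fderiv ℝ (fun q : ℝ × ℝ × ℝ => f q.1 q.2.1 q.2.2)) :=
    hf.fderiv_right (m := ((⊤ : ℕ∞) : WithTop ℕ∞)) (by norm_cast)
  exact (ContinuousLinearMap.apply ℝ ℝ v).contDiff.comp h1

lemma pdx' (hf : Sm f) : Sm (pdx f) := by
  have : (fun p : ℝ × ℝ × ℝ => pdx f p.1 p.2.1 p.2.2)
      = fun p : ℝ × ℝ × ℝ =>
        fderiv ℝ (fun q : ℝ × ℝ × ℝ => f q.1 q.2.1 q.2.2) p (1, 0, 0) := by
    funext p
    exact hf.pdx_eq_fderiv p.1 p.2.1 p.2.2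
  rw [Sm, this]
  exact hf.fderiv_apply_smooth _

lemma pdy' (hf : Sm f) : Sm (pdy f) := by
  have : (fun p : ℝ × ℝ × ℝ => pdy f p.1 p.2.1 p.2.2)
      = fun p : ℝ × ℝ × ℝ =>
        fderiv ℝ (fun q : ℝ × ℝ × ℝ => f q.1 q.2.1 q.2.2) p (0, 1, 0) := by
    funext p
    exact hf.pdy_eq_fderiv p.1 p.2.1 p.2.2
  rw [Sm, this]
  exact hf.fderiv_apply_smooth _

lemma pdt' (hf : Sm f) : Sm (pdt f) := by
  have : (fun p : ℝ × ℝ × ℝ => pdt f p.1 p.2.1 p.2.2)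
      = fun p : ℝ × ℝ × ℝ =>
        fderiv ℝ (fun q : ℝ × ℝ × ℝ => f q.1 q.2.1 q.2.2) p (0, 0, 1) := by
    funext p
    exact hf.pdt_eq_fderiv p.1 p.2.1 p.2.2
  rw [Sm, this]
  exact hf.fderiv_apply_smooth _

/-- second fderiv applied to two vectors, as a partial-derivative-of-partial-derivative. -/
lemma snd_eq (hf : Sm f) (v : ℝ × ℝ × ℝ) (p : ℝ × ℝ × ℝ) (w : ℝ × ℝ × ℝ) :
    fderiv ℝ (fun q : ℝ × ℝ × ℝ =>
        fderiv ℝ (fun q' : ℝ × ℝ × ℝ => f q'.1 q'.2.1 q'.2.2) q v) p w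
      = fderiv ℝ (fderiv ℝ (fun q : ℝ × ℝ × ℝ => f q.1 q.2.1 q.2.2)) p w v := by
  have hc : DifferentiableAt ℝ (fderiv ℝ (fun q : ℝ × ℝ × ℝ => f q.1 q.2.1 q.2.2)) p :=
    (hf.fderiv_right (m := ((⊤ : ℕ∞) : WithTop ℕ∞)) (by norm_cast)).differentiable
      (by simp) p
  have := fderiv_clm_apply (𝕜 := ℝ) hc (differentiableAt_const v)
  rw [this]
  simp

lemma symm (hf : Sm f) (p v w : ℝ × ℝ × ℝ) :
    fderiv ℝ (fderiv ℝ (fun q : ℝ × ℝ × ℝ => f q.1 q.2.1 q.2.2)) p v w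
      = fderiv ℝ (fderiv ℝ (fun q : ℝ × ℝ × ℝ => f q.1 q.2.1 q.2.2)) p w v :=
  (hf.contDiffAt.isSymmSndFDerivAt (by simp [minSmoothness_of_isRCLikeNormedField]; exact WithTop.coe_le_coe.mpr (le_top : (2:ℕ∞) ≤ ⊤))) v w

lemma comm_xy (hf : Sm f) : pdx (pdy f) = pdy (pdx f) := by
  funext x y t
  rw [(hf.pdy').pdx_eq_fderiv, (hf.pdx').pdy_eq_fderiv]
  have e1 : (fun q : ℝ × ℝ × ℝ => pdy f q.1 q.2.1 q.2.2)
      = fun q : ℝ × ℝ × ℝ =>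
        fderiv ℝ (fun q' : ℝ × ℝ × ℝ => f q'.1 q'.2.1 q'.2.2) q (0, 1, 0) := by
    funext q; exact hf.pdy_eq_fderiv q.1 q.2.1 q.2.2
  have e2 : (fun q : ℝ × ℝ × ℝ => pdx f q.1 q.2.1 q.2.2)
      = fun q : ℝ × ℝ × ℝ =>
        fderiv ℝ (fun q' : ℝ × ℝ × ℝ => f q'.1 q'.2.1 q'.2.2) q (1, 0, 0) := by
    funext q; exact hf.pdx_eq_fderiv q.1 q.2.1 q.2.2
  rw [e1, e2, hf.snd_eq, hf.snd_eq]
  exact hf.symm _ _ _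

lemma comm_xt (hf : Sm f) : pdx (pdt f) = pdt (pdx f) := by
  funext x y t
  rw [(hf.pdt').pdx_eq_fderiv, (hf.pdx').pdt_eq_fderiv]
  have e1 : (fun q : ℝ × ℝ × ℝ => pdt f q.1 q.2.1 q.2.2)
      = fun q : ℝ × ℝ × ℝ =>
        fderiv ℝ (fun q' : ℝ × ℝ × ℝ => f q'.1 q'.2.1 q'.2.2) q (0, 0, 1) := by
    funext q; exact hf.pdt_eq_fderiv q.1 q.2.1 q.2.2
  have e2 : (fun q : ℝ × ℝ × ℝ => pdx f q.1 q.2.1 q.2.2)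
      = fun q : ℝ × ℝ × ℝ =>
        fderiv ℝ (fun q' : ℝ × ℝ × ℝ => f q'.1 q'.2.1 q'.2.2) q (1, 0, 0) := by
    funext q; exact hf.pdx_eq_fderiv q.1 q.2.1 q.2.2
  rw [e1, e2, hf.snd_eq, hf.snd_eq]
  exact hf.symm _ _ _

lemma comm_yt (hf : Sm f) : pdy (pdt f) = pdt (pdy f) := by
  funext x y t
  rw [(hf.pdt').pdy_eq_fderiv, (hf.pdy').pdt_eq_fderiv]
  have e1 : (fun q : ℝ × ℝ × ℝ => pdt f q.1 q.2.1 q.2.2)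
      = fun q : ℝ × ℝ × ℝ =>
        fderiv ℝ (fun q' : ℝ × ℝ × ℝ => f q'.1 q'.2.1 q'.2.2) q (0, 0, 1) := by
    funext q; exact hf.pdt_eq_fderiv q.1 q.2.1 q.2.2
  have e2 : (fun q : ℝ × ℝ × ℝ => pdy f q.1 q.2.1 q.2.2)
      = fun q : ℝ × ℝ × ℝ =>
        fderiv ℝ (fun q' : ℝ × ℝ × ℝ => f q'.1 q'.2.1 q'.2.2) q (0, 1, 0) := by
    funext q; exact hf.pdy_eq_fderiv q.1 q.2.1 q.2.2
  rw [e1, e2, hf.snd_eq, hf.snd_eq]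
  exact hf.symm _ _ _

end Sm

/-- If `φ` is smooth, nowhere zero, and satisfies `φ_t + φ_xx = 0`, then
`u = 2 φ_x / φ` and `h = -2 φ_x φ_y / φ² + 2 φ_xy / φ - 1` satisfy the
(2+1)-dimensional dispersive long wave equations. -/
theorem dlw_transform_plus (φ : ℝ → ℝ → ℝ → ℝ)
    (hφ : ContDiff ℝ (⊤ : ℕ∞) (fun p : ℝ × ℝ × ℝ => φ p.1 p.2.1 p.2.2))
    (hne : ∀ x y t, φ x y t ≠ 0)
    (hheat : ∀ x y t, pdt φ x y t + pdx (pdx φ) x y t = 0)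
    (u h : ℝ → ℝ → ℝ → ℝ)
    (hu : u = fun x y t => 2 * pdx φ x y t / φ x y t)
    (hh : h = fun x y t =>
      -2 * pdx φ x y t * pdy φ x y t / (φ x y t) ^ 2
        + 2 * pdy (pdx φ) x y t / φ x y t - 1) :
    (∀ x y t, pdt (pdy u) x y t + pdx (pdx h) x y t
        + (1 / 2) * pdy (pdx (fun a b c => (u a b c) ^ 2)) x y t = 0) ∧
    (∀ x y t, pdt h x y t
        + pdx (fun a b c => u a b c * h a b c + u a b c + pdy (pdx u) a b c) x y t = 0) := by
  have hφ' : Sm φ := hφ.of_le (by simp)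
  set W : ℝ → ℝ → ℝ → ℝ := fun x y t => Real.log (φ x y t) with hW_def
  have hWsm : Sm W := ContDiff.log (hφ.of_le (by simp)) (fun p => hne _ _ _)
  obtain ⟨gx, hgx_def⟩ : ∃ g, g = pdx W := ⟨_, rfl⟩
  obtain ⟨gy, hgy_def⟩ : ∃ g, g = pdy W := ⟨_, rfl⟩
  obtain ⟨gxx, hgxx_def⟩ : ∃ g, g = pdx gx := ⟨_, rfl⟩
  obtain ⟨gxy, hgxy_def⟩ : ∃ g, g = pdx gy := ⟨_, rfl⟩
  obtain ⟨gxxy, hgxxy_def⟩ : ∃ g, g = pdx gxy := ⟨_, rfl⟩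
  obtain ⟨gxxxy, hgxxxy_def⟩ : ∃ g, g = pdx gxxy := ⟨_, rfl⟩
  have hgx_sm : Sm gx := hgx_def ▸ hWsm.pdx'
  have hgy_sm : Sm gy := hgy_def ▸ hWsm.pdy'
  have hgxx_sm : Sm gxx := hgxx_def ▸ hgx_sm.pdx'
  have hgxy_sm : Sm gxy := hgxy_def ▸ hgy_sm.pdx'
  have hgxxy_sm : Sm gxxy := hgxxy_def ▸ hgxy_sm.pdx'
  have hgxxxy_sm : Sm gxxxy := hgxxxy_def ▸ hgxxy_sm.pdx'
  -- basic formulas in terms of φ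
  have Ex : ∀ x y t, gx x y t = pdx φ x y t / φ x y t := by
    intro x y t; rw [hgx_def]
    exact ((hφ'.hasDerivAt_x x y t).log (hne x y t)).deriv
  have Ey : ∀ x y t, gy x y t = pdy φ x y t / φ x y t := by
    intro x y t; rw [hgy_def]
    exact ((hφ'.hasDerivAt_y x y t).log (hne x y t)).deriv
  have Et : ∀ x y t, pdt W x y t = pdt φ x y t / φ x y t := fun x y t =>
    ((hφ'.hasDerivAt_t x y t).log (hne x y t)).deriv
  have hgx_eq : gx = fun x y t => pdx φ x y t / φ x y t := by
    funext x y t; exact Ex x y t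
  have hgy_eq : gy = fun x y t => pdy φ x y t / φ x y t := by
    funext x y t; exact Ey x y t
  -- u and h in terms of gx / gxy
  have hu2 : u = fun x y t => 2 * gx x y t := by
    rw [hu, hgx_eq]; funext x y t; ring
  have Exy : ∀ x y t, gxy x y t
      = (pdx (pdy φ) x y t * φ x y t - pdy φ x y t * pdx φ x y t) / (φ x y t) ^ 2 := by
    intro x y t
    have hd := ((hφ'.pdy').hasDerivAt_x x y t).div (hφ'.hasDerivAt_x x y t) (hne x y t)
    rw [hgxy_def, hgy_eq]
    exact hd.deriv
  have hxx : ∀ x y t, gxx x y t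
      = (pdx (pdx φ) x y t * φ x y t - pdx φ x y t * pdx φ x y t) / (φ x y t) ^ 2 := by
    intro x y t
    have hd := ((hφ'.pdx').hasDerivAt_x x y t).div (hφ'.hasDerivAt_x x y t) (hne x y t)
    rw [hgxx_def, hgx_eq]
    exact hd.deriv
  have hh2 : h = fun x y t => 2 * gxy x y t - 1 := by
    rw [hh]; funext x y t
    rw [Exy x y t, hφ'.comm_xy]
    field_simp [hne x y t]
    ring
  -- heat equation for W
  have hWt : pdt W = fun x y t => -(gxx x y t + gx x y t ^ 2) := by
    funext x y t
    rw [Et x y t, hxx x y t, Ex x y t]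
    have hpt : pdt φ x y t = -(pdx (pdx φ) x y t) := by linarith [hheat x y t]
    rw [hpt]
    field_simp [hne x y t]
    ring
  -- Schwarz consequences
  have c1 : pdy gx = gxy := by
    rw [hgx_def, hgxy_def, hgy_def]; exact (hWsm.comm_xy).symm
  have c2 : pdy gxx = gxxy := by
    rw [hgxx_def, hgxxy_def, ← c1]; exact (hgx_sm.comm_xy).symm
  -- t-derivatives via heat equation
  have Hgy : pdt gy = fun x y t => -(gxxy x y t + 2 * gx x y t * gxy x y t) := by
    rw [hgy_def, ← hWsm.comm_yt, hWt]
    funext x y t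
    simp only [pdy]
    erw [(((hgxx_sm.hasDerivAt_y x y t).add
      ((hgx_sm.hasDerivAt_y x y t).pow 2)).neg).deriv, c2, c1]
    push_cast
    norm_num
  have Hgxy : pdt gxy = fun x y t =>
      -(gxxxy x y t + 2 * (gxx x y t * gxy x y t + gx x y t * gxxy x y t)) := by
    conv_lhs => rw [hgxy_def, ← hgy_sm.comm_xt, Hgy]
    funext x y t
    simp only [pdx]
    erw [(((hgxxy_sm.hasDerivAt_x x y t).add
      (((hgx_sm.hasDerivAt_x x y t).const_mul 2).mul
        (hgxy_sm.hasDerivAt_x x y t))).neg).deriv,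
      ← hgxxxy_def, ← hgxx_def, ← hgxxy_def]
    ring
  constructor
  · intro x y t
    have A1 : pdy u = fun a b c => 2 * gxy a b c := by
      rw [hu2]; funext a b c
      simp only [pdy]
      rw [((hgx_sm.hasDerivAt_y a b c).const_mul 2).deriv, c1]
    have A2 : pdt (pdy u) x y t
        = 2 * -(gxxxy x y t + 2 * (gxx x y t * gxy x y t + gx x y t * gxxy x y t)) := by
      rw [A1]
      simp only [pdt]
      rw [((hgxy_sm.hasDerivAt_t x y t).const_mul 2).deriv, Hgxy]
    have A3 : pdx h = fun a b c => 2 * gxxy a b c := by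
      rw [hh2]; funext a b c
      simp only [pdx]
      rw [(((hgxy_sm.hasDerivAt_x a b c).const_mul 2).sub_const 1).deriv,
        ← hgxxy_def]
    have A4 : pdx (pdx h) x y t = 2 * gxxxy x y t := by
      rw [A3]
      simp only [pdx]
      rw [((hgxxy_sm.hasDerivAt_x x y t).const_mul 2).deriv, ← hgxxxy_def]
    have A5 : pdx (fun a b c => (u a b c) ^ 2) = fun a b c => 8 * gx a b c * gxx a b c := by
      rw [hu2]; funext a b c
      simp only [pdx]
      erw [(((hgx_sm.hasDerivAt_x a b c).const_mul 2).pow 2).deriv, ← hgxx_def]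
      push_cast
      norm_num
      ring
    have A6 : pdy (fun a b c => 8 * gx a b c * gxx a b c) x y t
        = 8 * (gxy x y t * gxx x y t) + 8 * (gx x y t * gxxy x y t) := by
      simp only [pdy]
      erw [(((hgx_sm.hasDerivAt_y x y t).const_mul 8).mul
        (hgxx_sm.hasDerivAt_y x y t)).deriv, c1, c2]
      ring
    rw [A2, A4, A5, A6]
    ring
  · intro x y t
    have B1 : pdx u = fun a b c => 2 * gxx a b c := by
      rw [hu2]; funext a b c
      simp only [pdx]
      rw [((hgx_sm.hasDerivAt_x a b c).const_mul 2).deriv, ← hgxx_def]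
    have B2 : pdy (pdx u) = fun a b c => 2 * gxxy a b c := by
      rw [B1]; funext a b c
      simp only [pdy]
      rw [((hgxx_sm.hasDerivAt_y a b c).const_mul 2).deriv, c2]
    have B3 : pdt h x y t
        = 2 * -(gxxxy x y t + 2 * (gxx x y t * gxy x y t + gx x y t * gxxy x y t)) := by
      rw [hh2]
      simp only [pdt]
      rw [(((hgxy_sm.hasDerivAt_t x y t).const_mul 2).sub_const 1).deriv, Hgxy]
    have B4 : pdx (fun a b c => u a b c * h a b c + u a b c + pdy (pdx u) a b c) x y t
        = (2 * gxx x y t * (2 * gxy x y t - 1) + 2 * gx x y t * (2 * gxxy x y t)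
          + 2 * gxx x y t) + 2 * gxxxy x y t := by
      rw [B2, hu2, hh2]
      simp only [pdx]
      erw [((((hgx_sm.hasDerivAt_x x y t).const_mul 2).mul
        (((hgxy_sm.hasDerivAt_x x y t).const_mul 2).sub_const 1)).add
        ((hgx_sm.hasDerivAt_x x y t).const_mul 2)).add
        ((hgxxy_sm.hasDerivAt_x x y t).const_mul 2) |>.deriv,
        ← hgxx_def, ← hgxxy_def, ← hgxxxy_def]
    rw [B3, B4]
    ring
end

section
/- Let φ : ℝ³ → ℝ be a smooth nowhere-zero function of (x, y, t), and set u = 2 φ_x/φ and h = -2 φ_x φ_y/φ² + 2 φ_xy/φ - 1. Then, with ψ := φ_t + φ_xx, the following identity holds pointwise: u_yt + h_xx + (1/2)(u²)_xy = (2/φ³) φ_x φ_y ψ + (-2/φ²)(φ_x ψ_y + φ_y ψ_x + φ_xy ψ) + (2/φ) ψ_xy, i.e., the left-hand side of the first dispersive long wave equation equals the second-order linear differential operator [φ_x φ_y g''' + g''(φ_x ∂_y + φ_y ∂_x + φ_xy) + f' ∂²_{xy}] applied to ψ, where f(s) = g(s) = 2 ln s and primes denote derivatives evaluated at φ. -/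
namespace DLWaux

def unc (f : ℝ → ℝ → ℝ → ℝ) : ℝ × ℝ × ℝ → ℝ := fun p => f p.1 p.2.1 p.2.2

def S (f : ℝ → ℝ → ℝ → ℝ) : Prop := ContDiff ℝ (⊤ : ℕ∞) (unc f)

variable {f g : ℝ → ℝ → ℝ → ℝ} {x y t : ℝ}

lemma sliceX {F : ℝ × ℝ × ℝ → ℝ} (hF : DifferentiableAt ℝ F (x, y, t)) :
    HasDerivAt (fun x' => F (x', y, t)) (fderiv ℝ F (x, y, t) (1, 0, 0)) x := by
  have hι : HasDerivAt (fun x' : ℝ => ((x', y, t) : ℝ × ℝ × ℝ)) (1, 0, 0) x :=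
    (hasDerivAt_id x).prodMk (hasDerivAt_const x (y, t))
  exact hF.hasFDerivAt.comp_hasDerivAt x hι

lemma sliceY {F : ℝ × ℝ × ℝ → ℝ} (hF : DifferentiableAt ℝ F (x, y, t)) :
    HasDerivAt (fun y' => F (x, y', t)) (fderiv ℝ F (x, y, t) (0, 1, 0)) y := by
  have hι : HasDerivAt (fun y' : ℝ => ((x, y', t) : ℝ × ℝ × ℝ)) (0, 1, 0) y :=
    (hasDerivAt_const y x).prodMk ((hasDerivAt_id y).prodMk (hasDerivAt_const y t))
  exact hF.hasFDerivAt.comp_hasDerivAt y hι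

lemma sliceT {F : ℝ × ℝ × ℝ → ℝ} (hF : DifferentiableAt ℝ F (x, y, t)) :
    HasDerivAt (fun t' => F (x, y, t')) (fderiv ℝ F (x, y, t) (0, 0, 1)) t := by
  have hι : HasDerivAt (fun t' : ℝ => ((x, y, t') : ℝ × ℝ × ℝ)) (0, 0, 1) t :=
    (hasDerivAt_const t x).prodMk ((hasDerivAt_const t y).prodMk (hasDerivAt_id t))
  exact hF.hasFDerivAt.comp_hasDerivAt t hι

lemma pdx_eq (hf : S f) (x y t : ℝ) :
    pdx f x y t = fderiv ℝ (unc f) (x, y, t) (1, 0, 0) :=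
  (sliceX (hf.differentiable (by simp) (x, y, t))).deriv

lemma pdy_eq (hf : S f) (x y t : ℝ) :
    pdy f x y t = fderiv ℝ (unc f) (x, y, t) (0, 1, 0) :=
  (sliceY (hf.differentiable (by simp) (x, y, t))).deriv

lemma pdt_eq (hf : S f) (x y t : ℝ) :
    pdt f x y t = fderiv ℝ (unc f) (x, y, t) (0, 0, 1) :=
  (sliceT (hf.differentiable (by simp) (x, y, t))).deriv

lemma smooth_dir (hf : S f) (v : ℝ × ℝ × ℝ) :
    ContDiff ℝ (⊤ : ℕ∞) (fun p : ℝ × ℝ × ℝ => fderiv ℝ (unc f) p v) :=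
  (ContinuousLinearMap.apply ℝ ℝ v).contDiff.comp (hf.fderiv_right (by simp))

lemma S.px (hf : S f) : S (pdx f) := by
  have e : unc (pdx f) = fun p : ℝ × ℝ × ℝ => fderiv ℝ (unc f) p (1, 0, 0) := by
    funext p; obtain ⟨a, b, c⟩ := p; exact pdx_eq hf a b c
  rw [S, e]; exact smooth_dir hf _

lemma S.py (hf : S f) : S (pdy f) := by
  have e : unc (pdy f) = fun p : ℝ × ℝ × ℝ => fderiv ℝ (unc f) p (0, 1, 0) := by
    funext p; obtain ⟨a, b, c⟩ := p; exact pdy_eq hf a b c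
  rw [S, e]; exact smooth_dir hf _

lemma S.pt (hf : S f) : S (pdt f) := by
  have e : unc (pdt f) = fun p : ℝ × ℝ × ℝ => fderiv ℝ (unc f) p (0, 0, 1) := by
    funext p; obtain ⟨a, b, c⟩ := p; exact pdt_eq hf a b c
  rw [S, e]; exact smooth_dir hf _

lemma S.hx (hf : S f) : HasDerivAt (fun x' => f x' y t) (pdx f x y t) x := by
  have h := sliceX (hf.differentiable (by simp) (x, y, t))
  rw [pdx_eq hf]; exact h

lemma S.hy (hf : S f) : HasDerivAt (fun y' => f x y' t) (pdy f x y t) y := by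
  have h := sliceY (hf.differentiable (by simp) (x, y, t))
  rw [pdy_eq hf]; exact h

lemma S.ht (hf : S f) : HasDerivAt (fun t' => f x y t') (pdt f x y t) t := by
  have h := sliceT (hf.differentiable (by simp) (x, y, t))
  rw [pdt_eq hf]; exact h

lemma fderiv_app (hf : S f) (v w : ℝ × ℝ × ℝ) (p : ℝ × ℝ × ℝ) :
    fderiv ℝ (fun q => fderiv ℝ (unc f) q v) p w
      = fderiv ℝ (fderiv ℝ (unc f)) p w v := by
  have hd : DifferentiableAt ℝ (fderiv ℝ (unc f)) p :=
    ((hf.fderiv_right (m := 1) (by exact WithTop.coe_le_coe.mpr le_top)).differentiable one_ne_zero) p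
  have h := (ContinuousLinearMap.apply ℝ ℝ v).hasFDerivAt.comp p hd.hasFDerivAt
  rw [show (fun q => fderiv ℝ (unc f) q v)
      = (ContinuousLinearMap.apply ℝ ℝ v) ∘ (fderiv ℝ (unc f)) from rfl, h.fderiv]
  rfl

lemma fderiv2_symm (hf : S f) (p : ℝ × ℝ × ℝ) (v w : ℝ × ℝ × ℝ) :
    fderiv ℝ (fderiv ℝ (unc f)) p v w = fderiv ℝ (fderiv ℝ (unc f)) p w v :=
  second_derivative_symmetric (fun q => (hf.differentiable (by simp) q).hasFDerivAt)
    (((hf.fderiv_right (m := 1) (by exact WithTop.coe_le_coe.mpr le_top)).differentiable one_ne_zero) p).hasFDerivAt v w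

lemma comm_xy (hf : S f) : pdx (pdy f) = pdy (pdx f) := by
  funext a b c
  have ey : unc (pdy f) = fun p : ℝ × ℝ × ℝ => fderiv ℝ (unc f) p (0, 1, 0) := by
    funext p; obtain ⟨a, b, c⟩ := p; exact pdy_eq hf a b c
  have ex : unc (pdx f) = fun p : ℝ × ℝ × ℝ => fderiv ℝ (unc f) p (1, 0, 0) := by
    funext p; obtain ⟨a, b, c⟩ := p; exact pdx_eq hf a b c
  rw [pdx_eq hf.py, pdy_eq hf.px, ey, ex, fderiv_app hf _ _, fderiv_app hf _ _]
  exact fderiv2_symm hf _ _ _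

lemma comm_xt (hf : S f) : pdx (pdt f) = pdt (pdx f) := by
  funext a b c
  have et : unc (pdt f) = fun p : ℝ × ℝ × ℝ => fderiv ℝ (unc f) p (0, 0, 1) := by
    funext p; obtain ⟨a, b, c⟩ := p; exact pdt_eq hf a b c
  have ex : unc (pdx f) = fun p : ℝ × ℝ × ℝ => fderiv ℝ (unc f) p (1, 0, 0) := by
    funext p; obtain ⟨a, b, c⟩ := p; exact pdx_eq hf a b c
  rw [pdx_eq hf.pt, pdt_eq hf.px, et, ex, fderiv_app hf _ _, fderiv_app hf _ _]
  exact fderiv2_symm hf _ _ _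

lemma comm_yt (hf : S f) : pdy (pdt f) = pdt (pdy f) := by
  funext a b c
  have et : unc (pdt f) = fun p : ℝ × ℝ × ℝ => fderiv ℝ (unc f) p (0, 0, 1) := by
    funext p; obtain ⟨a, b, c⟩ := p; exact pdt_eq hf a b c
  have ey : unc (pdy f) = fun p : ℝ × ℝ × ℝ => fderiv ℝ (unc f) p (0, 1, 0) := by
    funext p; obtain ⟨a, b, c⟩ := p; exact pdy_eq hf a b c
  rw [pdy_eq hf.pt, pdt_eq hf.py, et, ey, fderiv_app hf _ _, fderiv_app hf _ _]
  exact fderiv2_symm hf _ _ _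

end DLWaux

set_option maxHeartbeats 2000000
open DLWaux

/-- With `u = 2 φ_x / φ`, `h = -2 φ_x φ_y / φ² + 2 φ_xy / φ - 1` and `ψ = φ_t + φ_xx`,
the left side of the first dispersive long wave equation equals the second-order linear
operator `φ_x φ_y g''' + g''(φ_x ∂_y + φ_y ∂_x + φ_xy) + f' ∂²_{xy}` (with
`f = g = 2 ln`, so `g'''(φ) = 4/φ³`, `g''(φ) = -2/φ²`, `f'(φ) = 2/φ`) applied to `ψ`. -/
theorem dlw_identity1_plus (φ u h ψ : ℝ → ℝ → ℝ → ℝ)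
    (hφ : ContDiff ℝ (⊤ : ℕ∞) (fun p : ℝ × ℝ × ℝ => φ p.1 p.2.1 p.2.2))
    (hne : ∀ x y t, φ x y t ≠ 0)
    (hu : u = fun x y t => 2 * pdx φ x y t / φ x y t)
    (hh : h = fun x y t =>
      -2 * pdx φ x y t * pdy φ x y t / (φ x y t) ^ 2
        + 2 * pdy (pdx φ) x y t / φ x y t - 1)
    (hψ : ψ = fun x y t => pdt φ x y t + pdx (pdx φ) x y t) :
    ∀ x y t, pdt (pdy u) x y t + pdx (pdx h) x y t
        + (1 / 2) * pdy (pdx (fun a b c => (u a b c) ^ 2)) x y t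
      = 4 / (φ x y t) ^ 3 * (pdx φ x y t * pdy φ x y t * ψ x y t)
        - 2 / (φ x y t) ^ 2 * (pdx φ x y t * pdy ψ x y t
            + pdy φ x y t * pdx ψ x y t + pdy (pdx φ) x y t * ψ x y t)
        + 2 / φ x y t * pdy (pdx ψ) x y t := by
  subst hu hh hψ
  have hP : S φ := hφ
  have hPx := hP.px
  have hPy := hP.py
  have hPt := hP.pt
  have hPxx := hPx.px
  have hPxy := hPx.py
  have hPxxx := hPxx.px
  have hPxxy := hPxx.py
  have cxy : pdx (pdy φ) = pdy (pdx φ) := comm_xy hP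
  have cxy1 : pdx (pdy (pdx φ)) = pdy (pdx (pdx φ)) := comm_xy hPx
  have cxy2 : pdx (pdy (pdx (pdx φ))) = pdy (pdx (pdx (pdx φ))) := comm_xy hPxx
  have cxt : pdx (pdt φ) = pdt (pdx φ) := comm_xt hP
  have cyt : pdy (pdt φ) = pdt (pdy φ) := comm_yt hP
  have cyt1 : pdy (pdt (pdx φ)) = pdt (pdy (pdx φ)) := comm_yt hPx
  have hA : pdy (fun x y t => 2 * pdx φ x y t / φ x y t)
      = fun x y t => (2 * pdy (pdx φ) x y t * φ x y t
          - 2 * pdx φ x y t * pdy φ x y t) / φ x y t ^ 2 := by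
    funext x y t
    exact ((hPx.hy.const_mul 2).fun_div hP.hy (hne x y t)).deriv.trans (by ring)
  have hB : pdt (fun x y t => (2 * pdy (pdx φ) x y t * φ x y t
          - 2 * pdx φ x y t * pdy φ x y t) / φ x y t ^ 2)
      = fun x y t => ((2 * pdt (pdy (pdx φ)) x y t * φ x y t
            + 2 * pdy (pdx φ) x y t * pdt φ x y t
            - (2 * pdt (pdx φ) x y t * pdy φ x y t
                + 2 * pdx φ x y t * pdt (pdy φ) x y t)) * φ x y t ^ 2
          - (2 * pdy (pdx φ) x y t * φ x y t - 2 * pdx φ x y t * pdy φ x y t)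
              * (2 * φ x y t * pdt φ x y t)) / φ x y t ^ 4 := by
    funext x y t
    exact ((((hPxy.ht.const_mul 2).fun_mul hP.ht).fun_sub
        ((hPx.ht.const_mul 2).fun_mul hPy.ht)).fun_div (hP.ht.fun_pow 2)
        (pow_ne_zero 2 (hne x y t))).deriv.trans
        (by field_simp [hne x y t]; norm_num; ring)
  have hC : pdx (fun x y t => -2 * pdx φ x y t * pdy φ x y t / (φ x y t) ^ 2
          + 2 * pdy (pdx φ) x y t / φ x y t - 1)
      = fun x y t => (-2 * pdx (pdx φ) x y t * pdy φ x y t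
            - 4 * pdx φ x y t * pdy (pdx φ) x y t) / φ x y t ^ 2
          + 4 * pdx φ x y t ^ 2 * pdy φ x y t / φ x y t ^ 3
          + 2 * pdy (pdx (pdx φ)) x y t / φ x y t := by
    funext x y t
    refine ((((hPx.hx.const_mul (-2)).fun_mul hPy.hx).fun_div (hP.hx.fun_pow 2)
        (pow_ne_zero 2 (hne x y t))).fun_add
        ((hPxy.hx.const_mul 2).fun_div hP.hx (hne x y t))).sub_const 1
        |>.deriv.trans ?_
    rw [cxy, cxy1]
    field_simp [hne x y t]
    ring
  have hD : pdx (fun x y t => (-2 * pdx (pdx φ) x y t * pdy φ x y t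
            - 4 * pdx φ x y t * pdy (pdx φ) x y t) / φ x y t ^ 2
          + 4 * pdx φ x y t ^ 2 * pdy φ x y t / φ x y t ^ 3
          + 2 * pdy (pdx (pdx φ)) x y t / φ x y t)
      = fun x y t => ((-2 * pdx (pdx (pdx φ)) x y t * pdy φ x y t
              - 2 * pdx (pdx φ) x y t * pdy (pdx φ) x y t
              - (4 * pdx (pdx φ) x y t * pdy (pdx φ) x y t
                  + 4 * pdx φ x y t * pdy (pdx (pdx φ)) x y t)) * φ x y t ^ 2
            - (-2 * pdx (pdx φ) x y t * pdy φ x y t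
                - 4 * pdx φ x y t * pdy (pdx φ) x y t)
                * (2 * φ x y t * pdx φ x y t)) / φ x y t ^ 4
          + ((8 * pdx φ x y t * pdx (pdx φ) x y t * pdy φ x y t
              + 4 * pdx φ x y t ^ 2 * pdy (pdx φ) x y t) * φ x y t ^ 3
            - 4 * pdx φ x y t ^ 2 * pdy φ x y t
                * (3 * φ x y t ^ 2 * pdx φ x y t)) / φ x y t ^ 6
          + (2 * pdy (pdx (pdx (pdx φ))) x y t * φ x y t
            - 2 * pdy (pdx (pdx φ)) x y t * pdx φ x y t) / φ x y t ^ 2 := by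
    funext x y t
    refine (((((hPxx.hx.const_mul (-2)).fun_mul hPy.hx).fun_sub
          ((hPx.hx.const_mul 4).fun_mul hPxy.hx)).fun_div (hP.hx.fun_pow 2)
          (pow_ne_zero 2 (hne x y t))).fun_add
        ((((hPx.hx.fun_pow 2).const_mul 4).fun_mul hPy.hx).fun_div (hP.hx.fun_pow 3)
          (pow_ne_zero 3 (hne x y t)))).fun_add
        ((hPxxy.hx.const_mul 2).fun_div hP.hx (hne x y t))
        |>.deriv.trans ?_
    rw [cxy, cxy1, cxy2]
    field_simp [hne x y t]
    ring
  have hE : pdx (fun a b c => (2 * pdx φ a b c / φ a b c) ^ 2)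
      = fun x y t => 8 * pdx φ x y t * pdx (pdx φ) x y t / φ x y t ^ 2
          - 8 * pdx φ x y t ^ 3 / φ x y t ^ 3 := by
    funext x y t
    exact (((hPx.hx.const_mul 2).fun_div hP.hx (hne x y t)).fun_pow 2).deriv.trans
      (by norm_num; field_simp [hne x y t]; ring)
  have hF : pdy (fun x y t => 8 * pdx φ x y t * pdx (pdx φ) x y t / φ x y t ^ 2
          - 8 * pdx φ x y t ^ 3 / φ x y t ^ 3)
      = fun x y t => ((8 * pdy (pdx φ) x y t * pdx (pdx φ) x y t
              + 8 * pdx φ x y t * pdy (pdx (pdx φ)) x y t) * φ x y t ^ 2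
            - 8 * pdx φ x y t * pdx (pdx φ) x y t
                * (2 * φ x y t * pdy φ x y t)) / φ x y t ^ 4
          - (24 * pdx φ x y t ^ 2 * pdy (pdx φ) x y t * φ x y t ^ 3
            - 8 * pdx φ x y t ^ 3 * (3 * φ x y t ^ 2 * pdy φ x y t)) / φ x y t ^ 6 := by
    funext x y t
    exact ((((hPx.hy.const_mul 8).fun_mul hPxx.hy).fun_div (hP.hy.fun_pow 2)
        (pow_ne_zero 2 (hne x y t))).fun_sub
        (((hPx.hy.fun_pow 3).const_mul 8).fun_div (hP.hy.fun_pow 3)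
        (pow_ne_zero 3 (hne x y t)))).deriv.trans (by field_simp [hne x y t]; ring)
  have hG : pdx (fun x y t => pdt φ x y t + pdx (pdx φ) x y t)
      = fun x y t => pdt (pdx φ) x y t + pdx (pdx (pdx φ)) x y t := by
    funext x y t
    exact (hPt.hx.add hPxx.hx).deriv.trans (by rw [cxt])
  have hH : pdy (fun x y t => pdt φ x y t + pdx (pdx φ) x y t)
      = fun x y t => pdt (pdy φ) x y t + pdy (pdx (pdx φ)) x y t := by
    funext x y t
    exact (hPt.hy.add hPxx.hy).deriv.trans (by rw [cyt])
  have hI : pdy (fun x y t => pdt (pdx φ) x y t + pdx (pdx (pdx φ)) x y t)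
      = fun x y t => pdt (pdy (pdx φ)) x y t + pdy (pdx (pdx (pdx φ))) x y t := by
    funext x y t
    exact ((hPx.pt.hy).fun_add hPxxx.hy).deriv.trans (by rw [cyt1])
  intro x y t
  simp only [hA, hB, hC, hD, hE, hF, hG, hH, hI]
  have h0 : φ x y t ≠ 0 := hne x y t
  field_simp [hne x y t]
  ring
end

section
/- Let a, b : ℝ → ℝ be smooth functions and let θ(x, y, t) = a(y)·x - a(y)²·t + b(y). Then the functions u(x, y, t) = a(y)·(1 + tanh(θ/2)) and h(x, y, t) = (1/2)·a(y)·(a'(y)·x - 2·a(y)·a'(y)·t + b'(y))·sech²(θ/2) + a'(y)·tanh(θ/2) + a'(y) - 1 satisfy the (2+1)-dimensional dispersive long wave equations: u_yt + h_xx + (1/2)(u²)_xy = 0 and h_t + (u h + u + u_xy)_x = 0. -/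
noncomputable def Tf (a b : ℝ → ℝ) (x y t : ℝ) : ℝ :=
  Real.tanh ((a y * x - a y ^ 2 * t + b y) / 2)

lemma sech_sq (s : ℝ) : (1 / Real.cosh s) ^ 2 = 1 - Real.tanh s ^ 2 := by
  have hc : Real.cosh s ≠ 0 := (Real.cosh_pos s).ne'
  rw [Real.tanh_eq_sinh_div_cosh]
  field_simp
  linarith [Real.cosh_sq_sub_sinh_sq s]

lemma tanh_HD (x : ℝ) : HasDerivAt Real.tanh (1 - Real.tanh x ^ 2) x := by
  have hc : Real.cosh x ≠ 0 := (Real.cosh_pos x).ne'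
  have h := (Real.hasDerivAt_sinh x).div (Real.hasDerivAt_cosh x) hc
  have h2 : (Real.cosh x * Real.cosh x - Real.sinh x * Real.sinh x) / Real.cosh x ^ 2
      = 1 - Real.tanh x ^ 2 := by
    rw [Real.tanh_eq_sinh_div_cosh]; field_simp
  rw [h2] at h
  have h3 : HasDerivAt (fun s => Real.sinh s / Real.cosh s) (1 - Real.tanh x ^ 2) x := h
  simpa only [← Real.tanh_eq_sinh_div_cosh] using h3

section lemmas

variable (a b : ℝ → ℝ)

lemma T_x (x y t : ℝ) :
    HasDerivAt (fun x' => Tf a b x' y t) ((1 - Tf a b x y t ^ 2) * (a y / 2)) x := by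
  have h1 : HasDerivAt (fun x' : ℝ => (a y * x' - a y ^ 2 * t + b y) / 2) (a y / 2) x := by
    have := ((((hasDerivAt_id x).const_mul (a y)).sub_const (a y ^ 2 * t)).add_const (b y)).div_const 2
    exact this.congr_deriv (by ring)
  exact (tanh_HD _).comp x h1

lemma T_t (x y t : ℝ) :
    HasDerivAt (fun t' => Tf a b x y t') ((1 - Tf a b x y t ^ 2) * (-(a y ^ 2) / 2)) t := by
  have h1 : HasDerivAt (fun t' : ℝ => (a y * x - a y ^ 2 * t' + b y) / 2) (-(a y ^ 2) / 2) t := by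
    have := ((((hasDerivAt_id t).const_mul (a y ^ 2)).const_sub (a y * x)).add_const (b y)).div_const 2
    exact this.congr_deriv (by ring)
  exact (tanh_HD _).comp t h1

lemma T_y (ha : Differentiable ℝ a) (hb : Differentiable ℝ b) (x y t : ℝ) :
    HasDerivAt (fun y' => Tf a b x y' t)
      ((1 - Tf a b x y t ^ 2)
        * ((deriv a y * x - 2 * a y * deriv a y * t + deriv b y) / 2)) y := by
  have hA : HasDerivAt a (deriv a y) y := (ha y).hasDerivAt
  have hB : HasDerivAt b (deriv b y) y := (hb y).hasDerivAt
  have h1 : HasDerivAt (fun y' : ℝ => (a y' * x - a y' ^ 2 * t + b y') / 2)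
      ((deriv a y * x - 2 * a y * deriv a y * t + deriv b y) / 2) y := by
    have := (((hA.mul_const x).sub ((hA.pow 2).mul_const t)).add hB).div_const 2
    exact this.congr_deriv (by push_cast; ring)
  exact (tanh_HD _).comp y h1

lemma pdx_u :
    pdx (fun x y t => a y * (1 + Tf a b x y t))
      = fun x y t => a y ^ 2 / 2 * (1 - Tf a b x y t ^ 2) := by
  funext x y t
  have H := ((T_x a b x y t).const_add 1).const_mul (a y)
  simp only [pdx]
  refine H.deriv.trans ?_; ring

lemma pdy_pdx_u (ha : Differentiable ℝ a) (hb : Differentiable ℝ b) :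
    pdy (fun x y t => a y ^ 2 / 2 * (1 - Tf a b x y t ^ 2))
      = fun x y t => a y * deriv a y * (1 - Tf a b x y t ^ 2)
          - a y ^ 2 / 2 * (deriv a y * x - 2 * a y * deriv a y * t + deriv b y)
            * Tf a b x y t * (1 - Tf a b x y t ^ 2) := by
  funext x y t
  have hA : HasDerivAt a (deriv a y) y := (ha y).hasDerivAt
  have H := ((hA.pow 2).div_const 2).mul (((T_y a b ha hb x y t).pow 2).const_sub 1)
  simp only [pdy]
  refine H.deriv.trans ?_; push_cast; (try simp only [Pi.pow_apply, Pi.mul_apply]); ring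

lemma pdy_u (ha : Differentiable ℝ a) (hb : Differentiable ℝ b) :
    pdy (fun x y t => a y * (1 + Tf a b x y t))
      = fun x y t => deriv a y * (1 + Tf a b x y t)
          + a y * (1 - Tf a b x y t ^ 2)
            * ((deriv a y * x - 2 * a y * deriv a y * t + deriv b y) / 2) := by
  funext x y t
  have hA : HasDerivAt a (deriv a y) y := (ha y).hasDerivAt
  have H := hA.mul ((T_y a b ha hb x y t).const_add 1)
  simp only [pdy]
  refine H.deriv.trans ?_; ring

lemma pdt_pdy_u (x y t : ℝ) :
    pdt (fun x y t => deriv a y * (1 + Tf a b x y t)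
          + a y * (1 - Tf a b x y t ^ 2)
            * ((deriv a y * x - 2 * a y * deriv a y * t + deriv b y) / 2)) x y t
      = -(3 / 2) * a y ^ 2 * deriv a y * (1 - Tf a b x y t ^ 2)
        + a y ^ 3 / 2 * Tf a b x y t * (1 - Tf a b x y t ^ 2)
          * (deriv a y * x - 2 * a y * deriv a y * t + deriv b y) := by
  have hT := T_t a b x y t
  have hP : HasDerivAt
      (fun t' : ℝ => (deriv a y * x - 2 * a y * deriv a y * t' + deriv b y) / 2)
      (-(a y * deriv a y)) t := by
    have := ((((hasDerivAt_id t).const_mul (2 * a y * deriv a y)).const_sub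
      (deriv a y * x)).add_const (deriv b y)).div_const 2
    exact this.congr_deriv (by ring)
  have H := ((hT.const_add 1).const_mul (deriv a y)).add
    ((((hT.pow 2).const_sub 1).const_mul (a y)).mul hP)
  simp only [pdt]
  refine H.deriv.trans ?_; push_cast; (try simp only [Pi.pow_apply, Pi.mul_apply]); ring

lemma pdx_h :
    pdx (fun x y t =>
        1 / 2 * a y * (deriv a y * x - 2 * a y * deriv a y * t + deriv b y)
            * (1 - Tf a b x y t ^ 2)
          + deriv a y * Tf a b x y t + deriv a y - 1)
      = fun x y t => a y * deriv a y * (1 - Tf a b x y t ^ 2)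
        - a y ^ 2 / 2 * (deriv a y * x - 2 * a y * deriv a y * t + deriv b y)
          * Tf a b x y t * (1 - Tf a b x y t ^ 2) := by
  funext x y t
  have hT := T_x a b x y t
  have hlin : HasDerivAt
      (fun x' : ℝ => deriv a y * x' - 2 * a y * deriv a y * t + deriv b y) (deriv a y) x := by
    have := (((hasDerivAt_id x).const_mul (deriv a y)).sub_const
      (2 * a y * deriv a y * t)).add_const (deriv b y)
    exact this.congr_deriv (by ring)
  have H := ((((hlin.const_mul (1 / 2 * a y)).mul (((hT.pow 2).const_sub 1))).add
    (hT.const_mul (deriv a y))).add_const (deriv a y)).sub_const 1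
  simp only [pdx]
  refine H.deriv.trans ?_; push_cast; (try simp only [Pi.pow_apply, Pi.mul_apply]); ring

lemma pdx_pdx_h (x y t : ℝ) :
    pdx (fun x y t => a y * deriv a y * (1 - Tf a b x y t ^ 2)
          - a y ^ 2 / 2 * (deriv a y * x - 2 * a y * deriv a y * t + deriv b y)
            * Tf a b x y t * (1 - Tf a b x y t ^ 2)) x y t
      = -(3 / 2) * a y ^ 2 * deriv a y * Tf a b x y t * (1 - Tf a b x y t ^ 2)
        - a y ^ 3 / 4 * (deriv a y * x - 2 * a y * deriv a y * t + deriv b y)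
          * (1 - Tf a b x y t ^ 2) * (1 - 3 * Tf a b x y t ^ 2) := by
  have hT := T_x a b x y t
  have hlin : HasDerivAt
      (fun x' : ℝ => deriv a y * x' - 2 * a y * deriv a y * t + deriv b y) (deriv a y) x := by
    have := (((hasDerivAt_id x).const_mul (deriv a y)).sub_const
      (2 * a y * deriv a y * t)).add_const (deriv b y)
    exact this.congr_deriv (by ring)
  have H := ((((hT.pow 2).const_sub 1).const_mul (a y * deriv a y))).sub
    (((hlin.const_mul (a y ^ 2 / 2)).mul hT).mul (((hT.pow 2).const_sub 1)))
  simp only [pdx]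
  refine H.deriv.trans ?_; push_cast; (try simp only [Pi.pow_apply, Pi.mul_apply]); ring

lemma pdx_usq :
    pdx (fun x y t => (a y * (1 + Tf a b x y t)) ^ 2)
      = fun x y t => a y ^ 3 * (1 + Tf a b x y t) * (1 - Tf a b x y t ^ 2) := by
  funext x y t
  have H := (((T_x a b x y t).const_add 1).const_mul (a y)).pow 2
  simp only [pdx]
  refine H.deriv.trans ?_; push_cast; (try simp only [Pi.pow_apply, Pi.mul_apply]); ring

lemma pdy_pdx_usq (ha : Differentiable ℝ a) (hb : Differentiable ℝ b) (x y t : ℝ) :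
    pdy (fun x y t => a y ^ 3 * (1 + Tf a b x y t) * (1 - Tf a b x y t ^ 2)) x y t
      = 3 * a y ^ 2 * deriv a y * (1 + Tf a b x y t) * (1 - Tf a b x y t ^ 2)
        + a y ^ 3 / 2 * (deriv a y * x - 2 * a y * deriv a y * t + deriv b y)
          * (1 - Tf a b x y t ^ 2)
          * ((1 - Tf a b x y t ^ 2) - 2 * Tf a b x y t * (1 + Tf a b x y t)) := by
  have hA : HasDerivAt a (deriv a y) y := (ha y).hasDerivAt
  have hT := T_y a b ha hb x y t
  have H := ((hA.pow 3).mul (hT.const_add 1)).mul ((hT.pow 2).const_sub 1)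
  simp only [pdy]
  refine H.deriv.trans ?_; push_cast; (try simp only [Pi.pow_apply, Pi.mul_apply]); ring

lemma pdt_h (x y t : ℝ) :
    pdt (fun x y t =>
        1 / 2 * a y * (deriv a y * x - 2 * a y * deriv a y * t + deriv b y)
            * (1 - Tf a b x y t ^ 2)
          + deriv a y * Tf a b x y t + deriv a y - 1) x y t
      = -(3 / 2) * a y ^ 2 * deriv a y * (1 - Tf a b x y t ^ 2)
        + a y ^ 3 / 2 * (deriv a y * x - 2 * a y * deriv a y * t + deriv b y)
          * Tf a b x y t * (1 - Tf a b x y t ^ 2) := by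
  have hT := T_t a b x y t
  have hlin : HasDerivAt
      (fun t' : ℝ => deriv a y * x - 2 * a y * deriv a y * t' + deriv b y)
      (-(2 * a y * deriv a y)) t := by
    have := (((hasDerivAt_id t).const_mul (2 * a y * deriv a y)).const_sub
      (deriv a y * x)).add_const (deriv b y)
    exact this.congr_deriv (by ring)
  have H := ((((hlin.const_mul (1 / 2 * a y)).mul (((hT.pow 2).const_sub 1))).add
    (hT.const_mul (deriv a y))).add_const (deriv a y)).sub_const 1
  simp only [pdt]
  refine H.deriv.trans ?_; push_cast; (try simp only [Pi.pow_apply, Pi.mul_apply]); ring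

lemma pdx_big (x y t : ℝ) :
    pdx (fun x y t =>
        a y * (1 + Tf a b x y t)
            * (1 / 2 * a y * (deriv a y * x - 2 * a y * deriv a y * t + deriv b y)
                  * (1 - Tf a b x y t ^ 2)
                + deriv a y * Tf a b x y t + deriv a y - 1)
          + a y * (1 + Tf a b x y t)
          + (a y * deriv a y * (1 - Tf a b x y t ^ 2)
              - a y ^ 2 / 2 * (deriv a y * x - 2 * a y * deriv a y * t + deriv b y)
                * Tf a b x y t * (1 - Tf a b x y t ^ 2))) x y t
      = a y ^ 2 / 2 * (1 - Tf a b x y t ^ 2)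
          * (1 / 2 * a y * (deriv a y * x - 2 * a y * deriv a y * t + deriv b y)
                * (1 - Tf a b x y t ^ 2)
              + deriv a y * Tf a b x y t + deriv a y - 1)
        + a y * (1 + Tf a b x y t)
            * (a y * deriv a y * (1 - Tf a b x y t ^ 2)
              - a y ^ 2 / 2 * (deriv a y * x - 2 * a y * deriv a y * t + deriv b y)
                * Tf a b x y t * (1 - Tf a b x y t ^ 2))
        + a y ^ 2 / 2 * (1 - Tf a b x y t ^ 2)
        + (-(3 / 2) * a y ^ 2 * deriv a y * Tf a b x y t * (1 - Tf a b x y t ^ 2)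
            - a y ^ 3 / 4 * (deriv a y * x - 2 * a y * deriv a y * t + deriv b y)
              * (1 - Tf a b x y t ^ 2) * (1 - 3 * Tf a b x y t ^ 2)) := by
  have hT := T_x a b x y t
  have hlin : HasDerivAt
      (fun x' : ℝ => deriv a y * x' - 2 * a y * deriv a y * t + deriv b y) (deriv a y) x := by
    have := (((hasDerivAt_id x).const_mul (deriv a y)).sub_const
      (2 * a y * deriv a y * t)).add_const (deriv b y)
    exact this.congr_deriv (by ring)
  have hU := (hT.const_add 1).const_mul (a y)
  have hH := ((((hlin.const_mul (1 / 2 * a y)).mul (((hT.pow 2).const_sub 1))).add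
    (hT.const_mul (deriv a y))).add_const (deriv a y)).sub_const 1
  have hG := ((((hT.pow 2).const_sub 1).const_mul (a y * deriv a y))).sub
    (((hlin.const_mul (a y ^ 2 / 2)).mul hT).mul (((hT.pow 2).const_sub 1)))
  have H := ((hU.mul hH).add hU).add hG
  simp only [pdx]
  refine H.deriv.trans ?_; push_cast; (try simp only [Pi.pow_apply, Pi.mul_apply, Pi.add_apply, Pi.sub_apply]); ring

end lemmas

/-- With `θ = a(y)x - a(y)²t + b(y)` for smooth `a, b`, the functions
`u = a(y)(1 + tanh(θ/2))` and
`h = (1/2)a(y)(a'(y)x - 2a(y)a'(y)t + b'(y))sech²(θ/2) + a'(y)tanh(θ/2) + a'(y) - 1`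
satisfy the (2+1)-dimensional dispersive long wave equations. -/
theorem dlw_exact_solution_plus (a b : ℝ → ℝ)
    (ha : ContDiff ℝ (⊤ : ℕ∞) a) (hb : ContDiff ℝ (⊤ : ℕ∞) b)
    (θ u h : ℝ → ℝ → ℝ → ℝ)
    (hθ : θ = fun x y t => a y * x - (a y) ^ 2 * t + b y)
    (hu : u = fun x y t => a y * (1 + Real.tanh (θ x y t / 2)))
    (hh : h = fun x y t =>
      (1 / 2) * a y * (deriv a y * x - 2 * a y * deriv a y * t + deriv b y)
          * (1 / Real.cosh (θ x y t / 2)) ^ 2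
        + deriv a y * Real.tanh (θ x y t / 2) + deriv a y - 1) :
    (∀ x y t, pdt (pdy u) x y t + pdx (pdx h) x y t
        + (1 / 2) * pdy (pdx (fun a' b' c' => (u a' b' c') ^ 2)) x y t = 0) ∧
    (∀ x y t, pdt h x y t
        + pdx (fun a' b' c' => u a' b' c' * h a' b' c' + u a' b' c'
            + pdy (pdx u) a' b' c') x y t = 0) := by
  have ha' : Differentiable ℝ a := ha.differentiable (by simp)
  have hb' : Differentiable ℝ b := hb.differentiable (by simp)
  subst hθ hu hh
  have hTf : ∀ x y t : ℝ,
      Real.tanh ((a y * x - a y ^ 2 * t + b y) / 2) = Tf a b x y t := fun _ _ _ => rfl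
  simp only [sech_sq, hTf]
  constructor
  · intro x y t
    rw [pdy_u a b ha' hb', pdt_pdy_u a b, pdx_h a b,
      pdx_usq a b, pdy_pdx_usq a b ha' hb', pdx_pdx_h a b]
    ring
  · intro x y t
    rw [pdx_u a b, pdy_pdx_u a b ha' hb', pdx_big a b, pdt_h a b]
    ring
end

section
/- Let a, c, d ∈ ℝ be constants. Then the functions u(x, y, t) = -a·(1 + tanh((1/2)(a·x + a²·t + c·y + d))) and h(x, y, t) = (a·c/2)·sech²((1/2)(a·x + a²·t + c·y + d)) - 1 satisfy the (2+1)-dimensional dispersive long wave equations: u_yt + h_xx + (1/2)(u²)_xy = 0 and h_t + (u h + u + u_xy)_x = 0. -/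
/-!
Along the phase `θ = (a x + c y + a² t + d) / 2` every derivative of a polynomial in `tanh θ` is
again a polynomial in `tanh θ`, because `tanh' = 1 - tanh²`; and `sech² θ = 1 - tanh² θ`. So both
`u` and `h` are polynomials in `tanh θ`, and each equation becomes a polynomial identity in `tanh θ`.
-/

open Polynomial Real

theorem Real.one_sub_tanh_sq (x : ℝ) : 1 - tanh x ^ 2 = (1 / cosh x) ^ 2 := by
  have := (cosh_pos x).ne'
  rw [tanh_eq_sinh_div_cosh]
  field_simp
  linarith [cosh_sq x]

theorem Real.hasDerivAt_tanh (x : ℝ) : HasDerivAt tanh (1 - tanh x ^ 2) x := by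
  have h := (hasDerivAt_sinh x).div (hasDerivAt_cosh x) (cosh_pos x).ne'
  rw [show tanh = sinh / cosh from funext tanh_eq_sinh_div_cosh]
  refine h.congr_deriv ?_
  have := (cosh_pos x).ne'
  rw [Pi.div_apply]
  field_simp

theorem HasDerivAt.eval_tanh (p : ℝ[X]) {f : ℝ → ℝ} {f' x : ℝ} (hf : HasDerivAt f f' x) :
    HasDerivAt (fun s => p.eval (tanh (f s)))
      (f' * ((1 - X ^ 2) * derivative p).eval (tanh (f x))) x := by
  have h := (p.hasDerivAt _).comp x ((hasDerivAt_tanh _).comp x hf)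
  simp only [eval_mul, eval_sub, eval_one, eval_pow, eval_X]
  exact h.congr_deriv (by simp only [Function.comp_apply]; ring)

noncomputable def tanhWave (k l m n : ℝ) : ℝ[X] →+* (ℝ → ℝ → ℝ → ℝ) :=
  RingHom.pi fun x => RingHom.pi fun y => RingHom.pi fun t =>
    evalRingHom (tanh (k * x + l * y + m * t + n))

section tanhWave

variable (k l m n : ℝ) (p : ℝ[X])

@[simp]
theorem tanhWave_apply (x y t : ℝ) :
    tanhWave k l m n p x y t = p.eval (tanh (k * x + l * y + m * t + n)) := rfl

theorem pdx_tanhWave :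
    pdx (tanhWave k l m n p) = tanhWave k l m n (C k * ((1 - X ^ 2) * derivative p)) := by
  ext x y t
  have h := HasDerivAt.eval_tanh p
    ((((hasDerivAt_id' x).const_mul k).add_const (l * y)).add_const (m * t) |>.add_const n)
  simpa [pdx] using h.deriv

theorem pdy_tanhWave :
    pdy (tanhWave k l m n p) = tanhWave k l m n (C l * ((1 - X ^ 2) * derivative p)) := by
  ext x y t
  have h := HasDerivAt.eval_tanh p
    ((((hasDerivAt_id' y).const_mul l).const_add (k * x)).add_const (m * t) |>.add_const n)
  simpa [pdy] using h.deriv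

theorem pdt_tanhWave :
    pdt (tanhWave k l m n p) = tanhWave k l m n (C m * ((1 - X ^ 2) * derivative p)) := by
  ext x y t
  have h := HasDerivAt.eval_tanh p
    (((hasDerivAt_id' t).const_mul m).const_add (k * x + l * y) |>.add_const n)
  simpa [pdt] using h.deriv

end tanhWave

/-- For constants `a, c, d`, the functions
`u = -a(1 + tanh((1/2)(ax + a²t + cy + d)))` and
`h = (ac/2)sech²((1/2)(ax + a²t + cy + d)) - 1`
satisfy the (2+1)-dimensional dispersive long wave equations. -/
theorem dlw_solitary_wave_minus (a c d : ℝ) (u h : ℝ → ℝ → ℝ → ℝ)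
    (hu : u = fun x y t =>
      -a * (1 + Real.tanh ((1 / 2) * (a * x + a ^ 2 * t + c * y + d))))
    (hh : h = fun x y t =>
      a * c / 2 * (1 / Real.cosh ((1 / 2) * (a * x + a ^ 2 * t + c * y + d))) ^ 2 - 1) :
    (∀ x y t, pdt (pdy u) x y t + pdx (pdx h) x y t
        + (1 / 2) * pdy (pdx (fun a' b' c' => (u a' b' c') ^ 2)) x y t = 0) ∧
    (∀ x y t, pdt h x y t
        + pdx (fun a' b' c' => u a' b' c' * h a' b' c' + u a' b' c'
            + pdy (pdx u) a' b' c') x y t = 0) := by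
  have phase (x y t : ℝ) : 1 / 2 * (a * x + a ^ 2 * t + c * y + d)
      = a / 2 * x + c / 2 * y + a ^ 2 / 2 * t + d / 2 := by
    ring
  have hu' : u = tanhWave (a / 2) (c / 2) (a ^ 2 / 2) (d / 2) (C (-a) * (1 + X)) := by
    ext x y t
    rw [hu, tanhWave_apply, ← phase]
    simp
  have hh' :
      h = tanhWave (a / 2) (c / 2) (a ^ 2 / 2) (d / 2) (C (a * c / 2) * (1 - X ^ 2) - 1) := by
    ext x y t
    rw [hh, tanhWave_apply, ← phase]
    simp [one_sub_tanh_sq]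
  have hu_sq : (fun x y t => u x y t ^ 2) = u ^ 2 := rfl
  have hflux : (fun x y t => u x y t * h x y t + u x y t + pdy (pdx u) x y t)
      = u * h + u + pdy (pdx u) := rfl
  rw [hu_sq, hflux, hu', hh', ← map_pow]
  simp only [pdx_tanhWave, pdy_tanhWave, pdt_tanhWave, ← map_mul, ← map_add]
  constructor <;> intro x y t <;>
  · simp only [tanhWave_apply, eval_add, eval_mul, eval_sub, eval_C, eval_X, eval_one, eval_pow,
      eval_zero, derivative_add, derivative_mul, derivative_sub, derivative_C, derivative_X,
      derivative_one, derivative_zero, derivative_pow]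
    ring
end
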